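/- Let k and m be positive integers and let n = mk. Then ∑_{π ∈ MP_{n,1}^k} t^{exc(π)} = A_m(t)^k as polynomials in ℚ[t]. -/

import Mathlib

/-!
A permutation in `MP (m * k) k 1` satisfies `π i ≡ i (mod k)`, so it permutes each residue class
`{j, j + k, …, j + (m - 1) k}` separately; relabelling the class of `j` increasingly by `Fin m`
turns it into a `k`-tuple of permutations of `Fin m`, and the relabelling preserves excedances.
Hence the left side is `(∑ σ : Perm (Fin m), t ^ exc σ) ^ k`, and it remains to see that `exc` and
`des` are equidistributed. Both generating polynomials satisfy the Eulerian recurrence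
`A (m + 1) = (1 + m t) A m + t (1 - t) A' m`: inserting the new letter `m` into the cycle of
`τ : Perm (Fin m)` right after `i` makes `i` an excedance and not `m` (inserting it as a fixed
point changes nothing), while inserting `m` into the one-line word of `τ` creates a descent
unless it goes to the end or into the middle of an existing descent.
-/

open Polynomial Finset

/-- Number of excedances of a permutation of `Fin n` (indices where `π i > i`). -/
def exc {n : ℕ} (π : Equiv.Perm (Fin n)) : ℕ :=
  (Finset.univ.filter fun i => π i > i).card

/-- Mod-k-alternating permutations of size `n` starting with remainder `r` (mod k):
permutations with `π i - i ≡ r - 1 (mod k)` for all `i`. -/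
def MP (n k r : ℕ) : Finset (Equiv.Perm (Fin n)) :=
  Finset.univ.filter fun π => ∀ i : Fin n, ((π i : ℤ) - (i : ℤ)) ≡ ((r : ℤ) - 1) [ZMOD (k : ℤ)]

/-- Number of descents of a permutation of `Fin n`: indices `i` with `i + 1 < n` and
`π (i+1) < π i`. -/
def des {n : ℕ} (π : Equiv.Perm (Fin n)) : ℕ :=
  (Finset.univ.filter fun i : Fin n =>
    (i : ℕ) + 1 < n ∧ π ⟨((i : ℕ) + 1) % n, Nat.mod_lt _ i.pos⟩ < π i).card

/-- The Eulerian polynomial `A_m(t) = ∑_{π ∈ S_m} t^(des π)`. -/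
noncomputable def Eulerian (m : ℕ) : ℚ[X] :=
  ∑ π : Equiv.Perm (Fin m), X ^ des π

theorem sum_pow_eq_of_add_eq_add {ι R : Type*} [CommRing R] {s : Finset ι} (x : R) {e : ℕ}
    {f a b : ι → ℕ} (hab : ∀ i ∈ s, a i ≤ b i) (hb : ∀ i ∈ s, b i ≤ 1)
    (hf : ∀ i ∈ s, f i + a i = e + b i) :
    ∑ i ∈ s, x ^ f i
      = x ^ e * (#s + ((∑ i ∈ s, b i : ℕ) - (∑ i ∈ s, a i : ℕ)) * (x - 1)) := by
  have hterm : ∀ i ∈ s, x ^ f i = x ^ e * (1 + ((b i : R) - a i) * (x - 1)) := by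
    intro i hi
    have := hf i hi
    rcases (by have := hab i hi; have := hb i hi; omega : a i = b i ∨ (a i = 0 ∧ b i = 1))
      with h | ⟨ha, hb'⟩
    · rw [h, sub_self, zero_mul, add_zero, mul_one, show f i = e by omega]
    · rw [ha, hb', show f i = e + 1 by omega]
      push_cast
      ring
  rw [Finset.sum_congr rfl hterm, ← Finset.mul_sum, Finset.sum_add_distrib, ← Finset.sum_mul,
    Finset.sum_sub_distrib]
  push_cast
  simp

noncomputable def eulerianStep (m : ℕ) : ℚ[X] →ₗ[ℚ] ℚ[X] :=
  LinearMap.mulLeft ℚ (1 + (m : ℚ[X]) * X) + LinearMap.mulLeft ℚ (X * (1 - X)) ∘ₗ derivative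

theorem eulerianStep_X_pow (m e : ℕ) :
    eulerianStep m (X ^ e) = X ^ e * ((m + 1 : ℚ[X]) + ((m : ℚ[X]) - (e : ℚ[X])) * (X - 1)) := by
  simp only [eulerianStep, LinearMap.add_apply, LinearMap.mulLeft_apply, LinearMap.comp_apply,
    derivative_X_pow]
  rcases e with _ | e
  · simp; ring
  · simp only [Nat.cast_add, Nat.cast_one, add_tsub_cancel_right, map_add, map_natCast, map_one]
    ring

section Words

variable {α : Type*}

def countDescents [LinearOrder α] (w : ℕ → α) (n : ℕ) : ℕ :=
  ∑ i ∈ range n, if w (i + 1) < w i then 1 else 0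

def insertAt (w : ℕ → α) (p : ℕ) (x : α) : ℕ → α :=
  fun i => if i < p then w i else if i = p then x else w (i - 1)

theorem insertAt_of_lt {w : ℕ → α} {p i : ℕ} {x : α} (h : i < p) : insertAt w p x i = w i :=
  if_pos h

@[simp] theorem insertAt_self (w : ℕ → α) (p : ℕ) (x : α) : insertAt w p x p = x := by
  simp [insertAt]

theorem insertAt_succ_of_le {w : ℕ → α} {p i : ℕ} {x : α} (h : p ≤ i) :
    insertAt w p x (i + 1) = w i := by
  simp [insertAt, show ¬ i + 1 < p by omega, show i + 1 ≠ p by omega]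

theorem insertAt_succAbove {m : ℕ} (w : ℕ → α) (p : Fin (m + 1)) (x : α) (j : Fin m) :
    insertAt w p x (p.succAbove j) = w j := by
  unfold Fin.succAbove
  split_ifs with h
  · exact insertAt_of_lt h
  · exact insertAt_succ_of_le (Fin.not_lt.1 h)

/-- Below `p` the pairs of adjacent letters are unchanged and above `p` they are shifted by one;
the pair `(w (p - 1), w p)` is replaced by the ascent `(w (p - 1), x)` and the pair `(x, w p)`. -/
theorem countDescents_insertAt [LinearOrder α] {w : ℕ → α} {p n : ℕ} {x : α} (hp : p ≤ n)
    (hx : ∀ i < p, w i < x) :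
    countDescents (insertAt w p x) (n + 1) + (if 0 < p ∧ w p < w (p - 1) then 1 else 0)
      = countDescents w n + if w p < x then 1 else 0 := by
  rcases p with _ | q
  · simp only [countDescents, Finset.sum_range_succ' _ n, insertAt_succ_of_le (Nat.zero_le _),
      insertAt_self]
    simp
  · obtain ⟨r, rfl⟩ := Nat.exists_eq_add_of_le hp
    have hq := hx q q.lt_succ_self
    have hlow : ∀ i ∈ range q,
        (if insertAt w (q + 1) x (i + 1) < insertAt w (q + 1) x i then 1 else 0)
          = if w (i + 1) < w i then 1 else 0 := fun i hi => by
      have := Finset.mem_range.1 hi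
      rw [insertAt_of_lt (by omega), insertAt_of_lt (by omega)]
    have hhigh : ∀ j ∈ range r,
        (if insertAt w (q + 1) x (q + (j + 1 + 1) + 1) < insertAt w (q + 1) x (q + (j + 1 + 1))
          then 1 else 0) = if w (q + (j + 1) + 1) < w (q + (j + 1)) then 1 else 0 := fun j _ => by
      rw [show q + (j + 1 + 1) = q + (j + 1) + 1 by ring, insertAt_succ_of_le (by omega),
        insertAt_succ_of_le (by omega)]
    simp only [countDescents]
    rw [show q + 1 + r + 1 = q + (r + 1 + 1) by ring, show q + 1 + r = q + (r + 1) by ring,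
      Finset.sum_range_add _ q (r + 1 + 1), Finset.sum_range_add _ q (r + 1),
      Finset.sum_range_succ' _ (r + 1), Finset.sum_range_succ' _ r, Finset.sum_range_succ' _ r,
      Finset.sum_congr rfl hlow, Finset.sum_congr rfl hhigh, zero_add, add_zero,
      insertAt_succ_of_le le_rfl, insertAt_self, insertAt_of_lt q.lt_succ_self]
    simp [not_lt.2 hq.le]
    ring

theorem sum_descentSlots_eq_countDescents [LinearOrder α] (w : ℕ → α) (n : ℕ) :
    (∑ p ∈ range (n + 1), if 0 < p ∧ w p < w (p - 1) then 1 else 0) = countDescents w n := by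
  rw [Finset.sum_range_succ']
  simp [countDescents]

end Words

open Equiv

namespace Equiv.Perm

variable {n m : ℕ}

def extendLast (τ : Perm (Fin m)) : Perm (Fin (m + 1)) :=
  finSuccEquivLast.symm.permCongr τ.optionCongr

@[simp] theorem extendLast_castSucc (τ : Perm (Fin m)) (i : Fin m) :
    extendLast τ i.castSucc = (τ i).castSucc := by
  simp [extendLast, permCongr_apply]

@[simp] theorem extendLast_last (τ : Perm (Fin m)) : extendLast τ (Fin.last m) = Fin.last m := by
  simp [extendLast, permCongr_apply]

theorem extendLast_injective : Function.Injective (extendLast (m := m)) := by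
  intro τ τ' h
  refine Equiv.ext fun i => ?_
  simpa using congrArg (fun ρ : Perm (Fin (m + 1)) => ρ i.castSucc) h

theorem bijective_extendLast_mul {g : Fin (m + 1) → Perm (Fin (m + 1))}
    (hg : ∀ p, g p p = Fin.last m) :
    Function.Bijective fun x : Perm (Fin m) × Fin (m + 1) => extendLast x.1 * g x.2 := by
  have hlast : ∀ τ p, (extendLast τ * g p : Perm (Fin (m + 1))) p = Fin.last m := by simp [hg]
  rw [Fintype.bijective_iff_injective_and_card]
  refine ⟨fun ⟨τ, p⟩ ⟨τ', p'⟩ h => ?_,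
    by simp [Fintype.card_perm, Nat.factorial_succ, mul_comm]⟩
  change extendLast τ * g p = extendLast τ' * g p' at h
  obtain rfl : p = p' := (extendLast τ * g p).injective <| by rw [hlast, h, hlast]
  rw [extendLast_injective (mul_right_cancel h)]

theorem sum_perm_succ {M : Type*} [AddCommMonoid M] {g : Fin (m + 1) → Perm (Fin (m + 1))}
    (hg : ∀ p, g p p = Fin.last m) (F : Perm (Fin (m + 1)) → M) :
    ∑ σ, F σ = ∑ τ : Perm (Fin m), ∑ p, F (extendLast τ * g p) := by
  rw [← Fintype.sum_prod_type']
  exact (Fintype.sum_bijective _ (bijective_extendLast_mul hg) _ _ fun _ => rfl).symm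

/-- The one-line notation of `σ`, padded with `⊤` from position `n` on, so that the last letter
is never the top of a descent. -/
def word (σ : Perm (Fin n)) : ℕ → WithTop ℕ :=
  fun i => if h : i < n then ((σ ⟨i, h⟩ : ℕ) : WithTop ℕ) else ⊤

theorem word_lt_iff (σ : Perm (Fin n)) (i : ℕ) : word σ i < n ↔ i < n := by
  unfold word
  split_ifs with h <;> simp [h]

theorem des_eq_countDescents (σ : Perm (Fin n)) : des σ = countDescents (word σ) n := by
  rw [des, Finset.card_filter, countDescents, ← Fin.sum_univ_eq_sum_range]
  refine Finset.sum_congr rfl fun i _ => ?_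
  by_cases h : (i : ℕ) + 1 < n
  · simp [word, h, Nat.mod_eq_of_lt h]
  · simp [word, h]

def moveToLast (p : Fin (m + 1)) : Perm (Fin (m + 1)) :=
  (finSuccEquiv' p).trans finSuccEquivLast.symm

@[simp] theorem moveToLast_self (p : Fin (m + 1)) : moveToLast p p = Fin.last m := by
  simp [moveToLast, finSuccEquiv'_at]

@[simp] theorem moveToLast_succAbove (p : Fin (m + 1)) (j : Fin m) :
    moveToLast p (p.succAbove j) = j.castSucc := by
  simp [moveToLast, finSuccEquiv'_succAbove]

theorem word_extendLast_mul_moveToLast (τ : Perm (Fin m)) (p : Fin (m + 1)) :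
    word (extendLast τ * moveToLast p) = insertAt (word τ) p m := by
  funext i
  by_cases hi : i < m + 1
  · obtain hp | ⟨j, hj⟩ := Fin.eq_self_or_eq_succAbove p ⟨i, hi⟩
    · have hip : i = p := congrArg Fin.val hp
      subst hip
      simp [word, hp, p.is_le]
    · have hij : i = p.succAbove j := congrArg Fin.val hj
      subst hij
      simp [word, insertAt_succAbove, Fin.is_le]
  · have : ¬ i - 1 < m := by omega
    simp [word, insertAt, hi, this, show ¬ i < p by omega, show i ≠ p by omega]

theorem des_extendLast_mul_moveToLast_add (τ : Perm (Fin m)) (p : Fin (m + 1)) :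
    des (extendLast τ * moveToLast p)
        + (if 0 < p.val ∧ word τ p < word τ (p - 1 : ℕ) then 1 else 0)
      = des τ + if word τ p < m then 1 else 0 := by
  rw [des_eq_countDescents, des_eq_countDescents, word_extendLast_mul_moveToLast]
  exact countDescents_insertAt p.is_le fun i hi => (word_lt_iff τ i).2 (by omega)

end Equiv.Perm

open Equiv.Perm

theorem exc_eq_sum {n : ℕ} (π : Perm (Fin n)) : exc π = ∑ i, if i < π i then 1 else 0 := by
  rw [exc, Finset.card_filter]

theorem exc_extendLast {m : ℕ} (τ : Perm (Fin m)) : exc (extendLast τ) = exc τ := by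
  simp [exc_eq_sum, Fin.sum_univ_castSucc (n := m)]

theorem exc_mul_swap_last {m : ℕ} {ρ : Perm (Fin (m + 1))} (hρ : ρ (Fin.last m) = Fin.last m)
    {i : Fin (m + 1)} (hi : i ≠ Fin.last m) :
    exc (ρ * swap (Fin.last m) i) + (if i < ρ i then 1 else 0) = exc ρ + 1 := by
  have hupd : (fun j => if j < (ρ * swap (Fin.last m) i) j then 1 else 0)
      = Function.update (fun j => if j < ρ j then 1 else 0) i 1 := by
    funext j
    rcases eq_or_ne j i with rfl | hji
    · simp [hρ, Fin.lt_last_iff_ne_last.2 hi]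
    rcases eq_or_ne j (Fin.last m) with rfl | hjl
    · simp [hji, hρ, not_lt.2 (ρ i).le_last]
    · simp [hji, swap_apply_of_ne_of_ne hjl hji]
  rw [exc_eq_sum, exc_eq_sum, hupd, Finset.sum_update_of_mem (Finset.mem_univ i),
    ← Finset.add_sum_erase _ _ (Finset.mem_univ i), Finset.sdiff_singleton_eq_erase]
  ring

theorem exc_extendLast_mul_swap_add {m : ℕ} (τ : Perm (Fin m)) (i : Fin (m + 1)) :
    exc (extendLast τ * swap (Fin.last m) i) + (if i < extendLast τ i then 1 else 0)
      = exc τ + if i = Fin.last m then 0 else 1 := by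
  rcases eq_or_ne i (Fin.last m) with rfl | hi
  · simp [← Perm.one_def, exc_extendLast]
  · rw [exc_mul_swap_last (extendLast_last τ) hi, exc_extendLast, if_neg hi]

theorem sum_X_pow_exc_succ (m : ℕ) :
    ∑ σ : Perm (Fin (m + 1)), (X : ℚ[X]) ^ exc σ
      = eulerianStep m (∑ τ : Perm (Fin m), X ^ exc τ) := by
  rw [sum_perm_succ (g := swap (Fin.last m)) (fun p => swap_apply_right _ _), map_sum]
  refine Finset.sum_congr rfl fun τ _ => ?_
  have hloss_le_gain : ∀ i,
      (if i < extendLast τ i then 1 else 0) ≤ if i = Fin.last m then 0 else 1 := by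
    intro i
    split_ifs with h₁ h₂ <;> simp_all
  rw [sum_pow_eq_of_add_eq_add X (fun i _ => hloss_le_gain i) (fun i _ => by split_ifs <;> simp)
      (fun i _ => exc_extendLast_mul_swap_add τ i),
    ← exc_eq_sum, exc_extendLast, eulerianStep_X_pow]
  have hcount : ∑ i : Fin (m + 1), (if i = Fin.last m then 0 else 1) = m := by
    simp [Fin.sum_univ_castSucc, (Fin.castSucc_lt_last _).ne]
  rw [hcount, Finset.card_univ, Fintype.card_fin]
  push_cast
  ring

theorem eulerian_succ (m : ℕ) : Eulerian (m + 1) = eulerianStep m (Eulerian m) := by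
  rw [Eulerian, Eulerian, sum_perm_succ (g := moveToLast) moveToLast_self, map_sum]
  refine Finset.sum_congr rfl fun τ _ => ?_
  have hloss_le_gain : ∀ p : Fin (m + 1),
      (if 0 < p.val ∧ word τ p < word τ (p - 1 : ℕ) then 1 else 0)
        ≤ if word τ p < m then 1 else 0 := by
    intro p
    split_ifs with h₁ h₂ <;> try simp
    exact h₂ (h₁.2.trans ((word_lt_iff τ _).2 (by omega)))
  rw [sum_pow_eq_of_add_eq_add X (fun i _ => hloss_le_gain i) (fun i _ => by split_ifs <;> simp)
      (fun i _ => des_extendLast_mul_moveToLast_add τ i), eulerianStep_X_pow]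
  have hgain : ∑ p : Fin (m + 1), (if word τ p < m then 1 else 0) = m := by
    rw [Fin.sum_univ_castSucc]
    simp [word_lt_iff]
  rw [hgain,
    Fin.sum_univ_eq_sum_range (fun p => if 0 < p ∧ word τ p < word τ (p - 1) then 1 else 0),
    sum_descentSlots_eq_countDescents, ← des_eq_countDescents, Finset.card_univ, Fintype.card_fin]
  push_cast
  ring

theorem sum_X_pow_exc_eq_eulerian (m : ℕ) :
    ∑ σ : Perm (Fin m), (X : ℚ[X]) ^ exc σ = Eulerian m := by
  induction m with
  | zero => simp [Eulerian, exc, des]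
  | succ m ih => rw [sum_X_pow_exc_succ, ih, eulerian_succ]

theorem mem_MP_one_iff {n k : ℕ} {π : Perm (Fin n)} :
    π ∈ MP n k 1 ↔ ∀ i : Fin n, (i : ℕ) ≡ (π i : ℕ) [MOD k] := by
  simp [MP, Int.modEq_zero_iff_dvd, Nat.modEq_iff_dvd]

theorem finProdFinEquiv_modEq_iff {m k : ℕ} (x y : Fin m × Fin k) :
    (finProdFinEquiv x : ℕ) ≡ finProdFinEquiv y [MOD k] ↔ x.2 = y.2 := by
  simp [Nat.ModEq, Nat.mod_eq_of_lt, Fin.val_inj]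

theorem finProdFinEquiv_lt_iff {m k : ℕ} (a b : Fin m) (j : Fin k) :
    finProdFinEquiv (a, j) < finProdFinEquiv (b, j) ↔ a < b := by
  rw [Fin.lt_def, Fin.lt_def, finProdFinEquiv_apply_val,
    finProdFinEquiv_apply_val, Nat.add_lt_add_iff_left, Nat.mul_lt_mul_left j.pos]

namespace Equiv.Perm

variable {m k : ℕ}

def blockPerm (f : Fin k → Perm (Fin m)) : Perm (Fin (m * k)) :=
  finProdFinEquiv.permCongr (prodCongrLeft f)

theorem blockPerm_apply (f : Fin k → Perm (Fin m)) (x : Fin m × Fin k) :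
    blockPerm f (finProdFinEquiv x) = finProdFinEquiv (f x.2 x.1, x.2) := by
  obtain ⟨a, j⟩ := x
  simp [blockPerm, permCongr_apply, prodCongrLeft_apply]

theorem blockPerm_injective : Function.Injective (blockPerm (m := m) (k := k)) := by
  intro f f' h
  funext j
  refine Equiv.ext fun a => ?_
  simpa [blockPerm_apply] using congrArg (fun ρ : Perm _ => ρ (finProdFinEquiv (a, j))) h

theorem mem_MP_one_iff_snd {π : Perm (Fin (m * k))} :
    π ∈ MP (m * k) k 1 ↔ ∀ x, (finProdFinEquiv.symm (π (finProdFinEquiv x))).2 = x.2 := by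
  rw [mem_MP_one_iff, ← finProdFinEquiv.forall_congr_right]
  refine forall_congr' fun x => ?_
  rw [← finProdFinEquiv.apply_symm_apply (π (finProdFinEquiv x)), finProdFinEquiv_modEq_iff,
    Equiv.symm_apply_apply, eq_comm]

theorem blockPerm_mem_MP (f : Fin k → Perm (Fin m)) : blockPerm f ∈ MP (m * k) k 1 :=
  mem_MP_one_iff_snd.2 fun x => by simp [blockPerm_apply]

theorem exists_blockPerm_eq {π : Perm (Fin (m * k))} (hπ : π ∈ MP (m * k) k 1) :
    ∃ f, blockPerm f = π := by
  set ρ : Perm (Fin m × Fin k) := finProdFinEquiv.symm.permCongr π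
  have hρ : ∀ x, (ρ x).2 = x.2 := mem_MP_one_iff_snd.1 hπ
  have hinj : ∀ j, Function.Injective fun a => (ρ (a, j)).1 := fun j a a' h =>
    congrArg Prod.fst (ρ.injective (Prod.ext h ((hρ (a, j)).trans (hρ (a', j)).symm)))
  refine ⟨fun j => ofBijective _ (Finite.injective_iff_bijective.1 (hinj j)),
    Equiv.ext fun y => ?_⟩
  obtain ⟨x, rfl⟩ := finProdFinEquiv.surjective y
  rw [blockPerm_apply, ofBijective_apply, ← finProdFinEquiv.apply_symm_apply (π _)]
  exact congrArg finProdFinEquiv (Prod.ext rfl (hρ x).symm)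

theorem MP_eq_map_blockPerm :
    MP (m * k) k 1 = univ.map ⟨blockPerm, blockPerm_injective (m := m) (k := k)⟩ := by
  ext π
  simp only [Finset.mem_map, Finset.mem_univ, true_and, Function.Embedding.coeFn_mk]
  exact ⟨fun hπ => exists_blockPerm_eq hπ, fun ⟨f, hf⟩ => hf ▸ blockPerm_mem_MP f⟩

theorem exc_blockPerm (f : Fin k → Perm (Fin m)) : exc (blockPerm f) = ∑ j, exc (f j) := by
  rw [exc_eq_sum, ← finProdFinEquiv.sum_comp, Fintype.sum_prod_type_right]
  simp_rw [blockPerm_apply, finProdFinEquiv_lt_iff, exc_eq_sum]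

end Equiv.Perm

theorem stmt10_general (k m : ℕ) (n : ℕ) (hn : n = m * k) :
    ∑ π ∈ MP n k 1, (X : ℚ[X]) ^ exc π = (Eulerian m) ^ k := by
  subst hn
  calc ∑ π ∈ MP (m * k) k 1, (X : ℚ[X]) ^ exc π
      = ∑ f : Fin k → Perm (Fin m), ∏ j, (X : ℚ[X]) ^ exc (f j) := by
        simp [MP_eq_map_blockPerm, exc_blockPerm, Finset.prod_pow_eq_pow_sum]
    _ = ∏ _j : Fin k, ∑ σ : Perm (Fin m), (X : ℚ[X]) ^ exc σ :=
        (Fintype.prod_sum fun _ σ => (X : ℚ[X]) ^ exc σ).symm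
    _ = Eulerian m ^ k := by simp [sum_X_pow_exc_eq_eulerian]

theorem stmt10 (k m : ℕ) (hk : 0 < k) (hm : 0 < m) (n : ℕ) (hn : n = m * k) :
    ∑ π ∈ MP n k 1, (X : ℚ[X]) ^ exc π = (Eulerian m) ^ k :=
  stmt10_general k m n hn
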